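/- Let H be a finite hypergraph, A, B disjoint subsets of V(H) with A independent, and suppose there exist t pairwise disjoint sets O_1,...,O_t, each nonempty of size at most r, where each O_i = S_i \ A for some hyperedge S_i of H with S_i ∩ B = ∅. Then ρ_{A,B}(H) ≤ 2^{-(|A|+|B|)}·(1 - 2^{-r})^t. -/

import Mathlib

open Finset

/-- `rho V E A B` is the number of independent sets `S ⊆ V` (containing no
hyperedge of `E`) with `A ⊆ S` and `S ∩ B = ∅`, divided by `2^|V|`. -/
noncomputable def rho {α : Type*} [DecidableEq α]
    (V : Finset α) (E : Finset (Finset α)) (A B : Finset α) : ℝ :=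
  ((V.powerset.filter
      (fun S => (∀ e ∈ E, ¬ e ⊆ S) ∧ A ⊆ S ∧ S ∩ B = ∅)).card : ℝ) / 2 ^ V.card

lemma two_pow_sub_one_le_aux {c r : ℕ} (hc : c ≤ r) :
    (2:ℝ)^c - 1 ≤ 2^c * (1 - (2:ℝ)⁻¹ ^ r) := by
  have h1 : (2:ℝ)^c ≤ 2^r := pow_le_pow_right₀ one_le_two hc
  have h2 : (2:ℝ)⁻¹^r * 2^r = 1 := by
    rw [← mul_pow]; norm_num
  have h3 : (0:ℝ) ≤ (2:ℝ)⁻¹^r := by positivity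
  nlinarith

lemma key_count {α : Type*} [DecidableEq α] (r : ℕ) (F : Finset (Finset α)) :
    ∀ (W : Finset α), (∀ o ∈ F, o ⊆ W) →
    (∀ o ∈ F, o.card ≤ r) → ((F : Set (Finset α)).Pairwise Disjoint) →
    ((W.powerset.filter (fun T => ∀ o ∈ F, ¬ o ⊆ T)).card : ℝ)
      ≤ 2 ^ W.card * (1 - (2:ℝ)⁻¹ ^ r) ^ F.card := by
  induction F using Finset.induction_on with
  | empty =>
      intro W _ _ _
      rw [Finset.filter_true_of_mem (by simp)]
      simp [Finset.card_powerset]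
  | @insert a F ha ih =>
      intro W hsub hr hd
      have haW : a ⊆ W := hsub a (mem_insert_self a F)
      have hdaF : ∀ o ∈ F, Disjoint a o := by
        intro o ho
        exact hd (by simp) (by simp [ho]) (fun h => ha (h ▸ ho))
      -- product target
      set P := (a.powerset.erase a) ×ˢ
        ((W \ a).powerset.filter (fun T => ∀ o ∈ F, ¬ o ⊆ T)) with hP
      have hcard : ((W.powerset.filter
          (fun T => ∀ o ∈ insert a F, ¬ o ⊆ T)).card : ℕ) ≤ P.card := by
        apply Finset.card_le_card_of_injOn (fun T => (T ∩ a, T \ a))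
        · intro T hT
          simp only [Finset.mem_coe, mem_filter, mem_powerset] at hT
          obtain ⟨hTW, hpred⟩ := hT
          have hna : ¬ a ⊆ T := hpred a (mem_insert_self a F)
          simp only [Finset.mem_coe, hP, mem_product, mem_erase, mem_powerset, mem_filter]
          refine ⟨⟨?_, inter_subset_right⟩, ?_, ?_⟩
          · intro h
            exact hna (by rw [← h]; exact inter_subset_left)
          · exact sdiff_subset_sdiff hTW Subset.rfl
          · intro o ho hoT
            exact hpred o (mem_insert_of_mem ho) (hoT.trans sdiff_subset)
        · intro T1 h1 T2 h2 heq
          have e1 : T1 ∩ a = T2 ∩ a := congrArg Prod.fst heq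
          have e2 : T1 \ a = T2 \ a := congrArg Prod.snd heq
          ext x
          by_cases hx : x ∈ a
          · constructor <;> intro hxT
            · have : x ∈ T2 ∩ a := e1 ▸ (mem_inter.mpr ⟨hxT, hx⟩)
              exact (mem_inter.mp this).1
            · have : x ∈ T1 ∩ a := e1 ▸ (mem_inter.mpr ⟨hxT, hx⟩)
              exact (mem_inter.mp this).1
          · constructor <;> intro hxT
            · have : x ∈ T2 \ a := e2 ▸ (mem_sdiff.mpr ⟨hxT, hx⟩)
              exact (mem_sdiff.mp this).1
            · have : x ∈ T1 \ a := e2 ▸ (mem_sdiff.mpr ⟨hxT, hx⟩)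
              exact (mem_sdiff.mp this).1
      have hc1 : (a.powerset.erase a).card = 2 ^ a.card - 1 := by
        rw [Finset.card_erase_of_mem (mem_powerset.mpr Subset.rfl),
          Finset.card_powerset]
      have hM := ih (W \ a)
        (fun o ho => subset_sdiff.mpr ⟨hsub o (mem_insert_of_mem ho),
          (hdaF o ho).symm⟩)
        (fun o ho => hr o (mem_insert_of_mem ho))
        (hd.mono (by simp))
      have hq0 : (0:ℝ) ≤ 1 - (2:ℝ)⁻¹ ^ r := by
        have : (2:ℝ)⁻¹ ^ r ≤ 1 := pow_le_one₀ (by norm_num) (by norm_num)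
        linarith
      have h1 : ((a.powerset.erase a).card : ℝ) ≤ 2 ^ a.card * (1 - (2:ℝ)⁻¹ ^ r) := by
        rw [hc1]
        have : (1:ℕ) ≤ 2 ^ a.card := Nat.one_le_two_pow
        push_cast [this]
        exact two_pow_sub_one_le_aux (hr a (mem_insert_self a F))
      have hPcard : (P.card : ℝ) = ((a.powerset.erase a).card : ℝ) *
          (((W \ a).powerset.filter (fun T => ∀ o ∈ F, ¬ o ⊆ T)).card : ℝ) := by
        rw [hP, Finset.card_product]; push_cast; ring
      have hWcard : (W \ a).card + a.card = W.card :=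
        Finset.card_sdiff_add_card_eq_card haW
      calc ((W.powerset.filter (fun T => ∀ o ∈ insert a F, ¬ o ⊆ T)).card : ℝ)
          ≤ (P.card : ℝ) := by exact_mod_cast hcard
        _ = ((a.powerset.erase a).card : ℝ) *
            (((W \ a).powerset.filter (fun T => ∀ o ∈ F, ¬ o ⊆ T)).card : ℝ) := hPcard
        _ ≤ (2 ^ a.card * (1 - (2:ℝ)⁻¹ ^ r)) *
            (2 ^ (W \ a).card * (1 - (2:ℝ)⁻¹ ^ r) ^ F.card) := by
            apply mul_le_mul h1 hM (by positivity)
            exact mul_nonneg (by positivity) hq0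
        _ = 2 ^ W.card * (1 - (2:ℝ)⁻¹ ^ r) ^ (insert a F).card := by
            rw [Finset.card_insert_of_notMem ha, ← hWcard, pow_add, pow_succ]
            ring

/-- Let `(V, E)` be a finite hypergraph, `A, B ⊆ V` disjoint with `A`
independent, and let `O 1, …, O t` be pairwise disjoint nonempty sets of size
at most `r`, each an out-set `S \ A` of some hyperedge `S` with `S ∩ B = ∅`.
Then `ρ_{A,B} ≤ 2^{-(|A|+|B|)} (1 - 2^{-r})^t`. -/
theorem rho_le_of_disjoint_outsets {α : Type*} [DecidableEq α]
    (V : Finset α) (E : Finset (Finset α)) (hE : ∀ e ∈ E, e ⊆ V)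
    (A B : Finset α) (hA : A ⊆ V) (hB : B ⊆ V) (hAB : Disjoint A B)
    (hAind : ∀ e ∈ E, ¬ e ⊆ A)
    (t r : ℕ) (O : Fin t → Finset α)
    (hdisj : ∀ i j, i ≠ j → Disjoint (O i) (O j))
    (hne : ∀ i, (O i).Nonempty) (hr : ∀ i, (O i).card ≤ r)
    (hout : ∀ i, ∃ S ∈ E, S ∩ B = ∅ ∧ O i = S \ A) :
    rho V E A B ≤ (2 : ℝ)⁻¹ ^ (A.card + B.card) * (1 - (2 : ℝ)⁻¹ ^ r) ^ t := by
  classical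
  set W := V \ (A ∪ B) with hW
  set F := Finset.image O Finset.univ with hF
  have hOinj : Function.Injective O := by
    intro i j hij
    by_contra h
    have := hdisj i j h
    rw [hij] at this
    exact (hne j).ne_empty (disjoint_self.mp this)
  have hFcard : F.card = t := by
    rw [hF, Finset.card_image_of_injective _ hOinj, Finset.card_univ,
      Fintype.card_fin]
  -- injection from rho's set into the key set
  have hinj : ((V.powerset.filter
      (fun S => (∀ e ∈ E, ¬ e ⊆ S) ∧ A ⊆ S ∧ S ∩ B = ∅)).card : ℕ)
      ≤ (W.powerset.filter (fun T => ∀ o ∈ F, ¬ o ⊆ T)).card := by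
    apply Finset.card_le_card_of_injOn (fun S => S \ A)
    · intro S hS
      simp only [Finset.mem_coe, mem_filter, mem_powerset] at hS
      obtain ⟨hSV, hind, hAS, hSB⟩ := hS
      simp only [Finset.mem_coe, mem_filter, mem_powerset]
      constructor
      · intro x hx
        rw [mem_sdiff] at hx
        rw [hW, mem_sdiff, mem_union]
        refine ⟨hSV hx.1, ?_⟩
        rintro (h | h)
        · exact hx.2 h
        · exact (Finset.notMem_empty x) (hSB ▸ mem_inter.mpr ⟨hx.1, h⟩)
      · intro o ho hoS
        rw [hF, Finset.mem_image] at ho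
        obtain ⟨i, -, rfl⟩ := ho
        obtain ⟨Si, hSiE, hSiB, hOi⟩ := hout i
        apply hind Si hSiE
        intro x hx
        by_cases hxA : x ∈ A
        · exact hAS hxA
        · have : x ∈ O i := hOi ▸ mem_sdiff.mpr ⟨hx, hxA⟩
          exact (mem_sdiff.mp (hoS this)).1
    · intro S1 h1 S2 h2 heq
      simp only [Finset.mem_coe, mem_filter, mem_powerset] at h1 h2
      have e1 : S1 \ A ∪ A = S1 := Finset.sdiff_union_of_subset h1.2.2.1
      have e2 : S2 \ A ∪ A = S2 := Finset.sdiff_union_of_subset h2.2.2.1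
      have heq' : S1 \ A = S2 \ A := heq
      rw [← e1, ← e2, heq']
  have hkey := key_count r F W
    (by
      intro o ho
      rw [hF, Finset.mem_image] at ho
      obtain ⟨i, -, rfl⟩ := ho
      obtain ⟨Si, hSiE, hSiB, hOi⟩ := hout i
      intro x hx
      rw [hW, mem_sdiff, mem_union]
      rw [hOi, mem_sdiff] at hx
      refine ⟨hE Si hSiE hx.1, ?_⟩
      rintro (h | h)
      · exact hx.2 h
      · exact (Finset.notMem_empty x) (hSiB ▸ mem_inter.mpr ⟨hx.1, h⟩))
    (by
      intro o ho
      rw [hF, Finset.mem_image] at ho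
      obtain ⟨i, -, rfl⟩ := ho
      exact hr i)
    (by
      intro o ho p hp hop
      rw [hF, Finset.coe_image] at ho hp
      obtain ⟨i, -, rfl⟩ := ho
      obtain ⟨j, -, rfl⟩ := hp
      exact hdisj i j (fun h => hop (h ▸ rfl)))
  have hABV : A ∪ B ⊆ V := union_subset hA hB
  have hABcard : (A ∪ B).card = A.card + B.card :=
    Finset.card_union_of_disjoint hAB
  have hWc : W.card + (A.card + B.card) = V.card := by
    rw [hW, ← hABcard]
    exact Finset.card_sdiff_add_card_eq_card hABV
  have hpow : (2:ℝ) ^ W.card = 2 ^ V.card * (2:ℝ)⁻¹ ^ (A.card + B.card) := by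
    rw [← hWc, pow_add]
    field_simp
    rw [← mul_pow]; norm_num
  rw [rho, div_le_iff₀ (by positivity)]
  calc ((V.powerset.filter
      (fun S => (∀ e ∈ E, ¬ e ⊆ S) ∧ A ⊆ S ∧ S ∩ B = ∅)).card : ℝ)
      ≤ ((W.powerset.filter (fun T => ∀ o ∈ F, ¬ o ⊆ T)).card : ℝ) := by
        exact_mod_cast hinj
    _ ≤ 2 ^ W.card * (1 - (2:ℝ)⁻¹ ^ r) ^ F.card := hkey
    _ = (2:ℝ)⁻¹ ^ (A.card + B.card) * (1 - (2:ℝ)⁻¹ ^ r) ^ t * 2 ^ V.card := by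
        rw [hFcard, hpow]; ring
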